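/- The function ?_{EM} is nowhere monotonic on (0,1): in every subinterval there exist points x₁ < x₂ with ?_{EM}(x₁) < ?_{EM}(x₂) and points y₁ < y₂ with ?_{EM}(y₁) > ?_{EM}(y₂). More precisely, if x₁ < x₂ first differ at digit position p with a_p(x₂) < a_p(x₁), then ?_{EM}(x₂) − ?_{EM}(x₁) > 0 when p is odd and ?_{EM}(x₂) − ?_{EM}(x₁) < 0 when p is even. -/

import Mathlib

/-- The Engel-type sum of a positive-integer digit sequence. -/
noncomputable def engelSum (a : ℕ → ℕ) : ℝ :=
  ∑' k : ℕ, ∏ m ∈ Finset.range (k + 1),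
    1 / (2 + (∑ i ∈ Finset.range (m + 1), (a i : ℝ)) - (m + 1))

/-- `F(a) = ∑ₖ (−1)^{k+1} 2^{1−a₁−⋯−a_k}`. -/
noncomputable def engelMinkowski (a : ℕ → ℕ) : ℝ :=
  ∑' k : ℕ, (-1 : ℝ) ^ k * (2 : ℝ) ^ ((1 : ℤ) - ∑ i ∈ Finset.range (k + 1), (a i : ℤ))

open Classical in
/-- `?_{EM}` as a function on `(0,1)`: evaluate `F` on a digit sequence of `x`. -/
noncomputable def EM (x : ℝ) : ℝ :=
  if h : ∃ a : ℕ → ℕ, (∀ k, 1 ≤ a k) ∧ engelSum a = x then engelMinkowski h.choose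
  else 0

/-!
Write `q m = 2 + a 0 + ⋯ + a m - (m + 1)`, so that `engelSum a = ∑ₖ ∏_{m ≤ k} 1 / q m` is an
Engel series with nondecreasing denominators. Its tail after `j` terms exceeds its first term
`∏_{m ≤ j} 1 / q m` and is at most the geometric bound `∏_{m < j} 1 / q m · 1 / (q j - 1)`, so
raising the first digit in which two sequences differ strictly lowers the sum. Hence digit
sequences are unique and `EM (engelSum a) = engelMinkowski a`; the greedy algorithm
`r ↦ (⌊1 / r⌋ + 1) r - 1` shows that every `x ∈ (0, 1]` has one.

The terms of `engelMinkowski a` at least halve at each step, so after the first difference `j`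
the alternating tail is dominated by its first term: raising the `j`-th digit changes
`engelMinkowski` by the sign of `(-1) ^ (j + 1)`, and moves the point left by less than the
`j`-th tail of its Engel series. Doing this for large even and odd `j` gives points just left of
any `x` where `EM` is smaller, and points where it is larger.
-/

open Finset Filter Topology

section Alternating

variable {c d : ℕ → ℝ}

lemma Summable.neg_one_pow_mul (hc : Summable c) : Summable fun k => (-1 : ℝ) ^ k * c k :=
  hc.abs.of_norm_bounded fun k => by simp

lemma StrictAnti.alternating_tsum_pos (hanti : StrictAnti c) (hc : Summable c) :
    0 < ∑' k, (-1 : ℝ) ^ k * c k := by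
  have heven : Summable fun k => c (2 * k) := hc.comp_injective fun m n h => by omega
  have hodd : Summable fun k => c (2 * k + 1) := hc.comp_injective fun m n h => by omega
  have h_even (k : ℕ) : (-1 : ℝ) ^ (2 * k) * c (2 * k) = c (2 * k) := by simp [pow_mul]
  have h_odd (k : ℕ) : (-1 : ℝ) ^ (2 * k + 1) * c (2 * k + 1) = -c (2 * k + 1) := by
    simp [pow_succ, pow_mul]
  rw [← tsum_even_add_odd (by simpa only [h_even] using heven)
    (by simpa only [h_odd] using hodd.neg), tsum_congr h_even, tsum_congr h_odd, tsum_neg,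
    ← sub_eq_add_neg, sub_pos]
  exact hodd.tsum_lt_tsum (i := 0) (fun k => (hanti (by omega)).le) (hanti (by omega)) heven

lemma alternating_tsum_eq_sub (hc : Summable c) :
    ∑' k, (-1 : ℝ) ^ k * c k = c 0 - ∑' k, (-1 : ℝ) ^ k * c (k + 1) := by
  simp [hc.neg_one_pow_mul.tsum_eq_zero_add, pow_succ, tsum_neg, sub_eq_add_neg]

lemma StrictAnti.alternating_tsum_mem_Ioo (hanti : StrictAnti c) (hc : Summable c) :
    ∑' k, (-1 : ℝ) ^ k * c k ∈ Set.Ioo (c 0 - c 1) (c 0) := by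
  have hc₁ : Summable fun k => c (k + 1) := (summable_nat_add_iff 1).mpr hc
  have h₁ := StrictAnti.alternating_tsum_pos (fun m n h => hanti (by omega)) hc₁
  have h₂ := StrictAnti.alternating_tsum_pos (fun m n h => hanti (by omega))
    ((summable_nat_add_iff 2).mpr hc)
  rw [alternating_tsum_eq_sub hc, alternating_tsum_eq_sub hc₁] at *
  constructor <;> linarith

lemma neg_one_pow_mul_alternating_tsum (hc : Summable c) (j : ℕ) :
    (-1 : ℝ) ^ j * ∑' k, (-1 : ℝ) ^ k * c k =
      (-1 : ℝ) ^ j * ∑ i ∈ range j, (-1 : ℝ) ^ i * c i + ∑' k, (-1 : ℝ) ^ k * c (k + j) := by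
  rw [← hc.neg_one_pow_mul.sum_add_tsum_nat_add j, mul_add, ← tsum_mul_left]
  congr 2 with k
  have hsq : ((-1 : ℝ) ^ j) ^ 2 = 1 := by rw [← pow_mul, pow_mul', neg_one_sq, one_pow]
  linear_combination (-1 : ℝ) ^ k * c (k + j) * hsq

lemma neg_one_pow_mul_alternating_tsum_lt (hc : StrictAnti c) (hcs : Summable c)
    (hd : StrictAnti d) (hds : Summable d) {j : ℕ} (hagree : ∀ i < j, c i = d i)
    (hj : c j ≤ d j - d (j + 1)) :
    (-1 : ℝ) ^ j * ∑' k, (-1 : ℝ) ^ k * c k < (-1 : ℝ) ^ j * ∑' k, (-1 : ℝ) ^ k * d k := by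
  have hhead : ∑ i ∈ range j, (-1 : ℝ) ^ i * c i = ∑ i ∈ range j, (-1 : ℝ) ^ i * d i :=
    sum_congr rfl fun i hi => by rw [hagree i (mem_range.mp hi)]
  have htail_c := StrictAnti.alternating_tsum_mem_Ioo (c := fun k => c (k + j))
    (fun m n h => hc (by omega)) ((summable_nat_add_iff j).mpr hcs)
  have htail_d := StrictAnti.alternating_tsum_mem_Ioo (c := fun k => d (k + j))
    (fun m n h => hd (by omega)) ((summable_nat_add_iff j).mpr hds)
  simp only [zero_add, add_comm 1 j] at htail_c htail_d
  rw [neg_one_pow_mul_alternating_tsum hcs j, neg_one_pow_mul_alternating_tsum hds j, hhead]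
  linarith [htail_c.2, htail_d.1]

end Alternating

section EngelSeries

variable {q q' : ℕ → ℝ}

noncomputable def engelProd (q : ℕ → ℝ) (j : ℕ) : ℝ := ∏ m ∈ range j, 1 / q m

noncomputable def engelSeries (q : ℕ → ℝ) : ℝ := ∑' k, engelProd q (k + 1)

lemma engelProd_zero : engelProd q 0 = 1 := prod_range_zero _

lemma engelProd_succ (j : ℕ) : engelProd q (j + 1) = engelProd q j / q j := by
  rw [engelProd, prod_range_succ, mul_one_div]; rfl

lemma engelProd_congr {j : ℕ} (hagree : ∀ i < j, q i = q' i) {m : ℕ} (hm : m ≤ j) :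
    engelProd q m = engelProd q' m :=
  prod_congr rfl fun i hi => by rw [hagree i ((mem_range.mp hi).trans_le hm)]

section Bounds

variable (hq : Monotone q) (hq₀ : 1 < q 0)
include hq hq₀

lemma engelProd_pos (j : ℕ) : 0 < engelProd q j :=
  prod_pos fun m _ => one_div_pos.mpr (by linarith [hq (Nat.zero_le m)])

lemma engelProd_add_le (j k : ℕ) : engelProd q (j + k) ≤ engelProd q j * (1 / q j) ^ k := by
  induction k with
  | zero => simp
  | succ k ih =>
    have hqj : 0 < q j := by linarith [hq (Nat.zero_le j)]
    have hPj := engelProd_pos hq hq₀ j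
    rw [← add_assoc, engelProd_succ, pow_succ, ← mul_assoc, mul_one_div]
    exact div_le_div₀ (by positivity) ih hqj (hq (Nat.le_add_right j k))

lemma summable_engelProd : Summable fun k => engelProd q (k + 1) := by
  have hr : 1 / q 0 < 1 := (div_lt_one (by linarith)).mpr hq₀
  refine .of_nonneg_of_le (fun k => (engelProd_pos hq hq₀ _).le) (fun k => ?_)
    ((summable_geometric_of_lt_one (by positivity) hr).comp_injective (add_left_injective 1))
  simpa [add_comm 1 k, engelProd_zero] using engelProd_add_le hq hq₀ 0 (k + 1)

lemma summable_engelProd_tail (j : ℕ) : Summable fun k => engelProd q (k + j + 1) :=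
  (summable_nat_add_iff (f := fun k => engelProd q (k + 1)) j).mpr (summable_engelProd hq hq₀)

lemma engelSeries_eq_sum_add_tsum_tail (j : ℕ) :
    engelSeries q = ∑ i ∈ range j, engelProd q (i + 1) + ∑' k, engelProd q (k + j + 1) :=
  ((summable_engelProd hq hq₀).sum_add_tsum_nat_add j).symm

lemma tsum_engelProd_tail_le (j : ℕ) :
    ∑' k, engelProd q (k + j + 1) ≤ engelProd q j / (q j - 1) := by
  have hqj : 1 < q j := hq₀.trans_le (hq (Nat.zero_le j))
  have hne : q j ≠ 0 := by positivity
  have hr₁ : 1 / q j < 1 := (div_lt_one (by linarith)).mpr hqj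
  have hgeom : HasSum (fun k => engelProd q j / q j * (1 / q j) ^ k)
      (engelProd q j / (q j - 1)) := by
    have hval : engelProd q j / q j * (1 - 1 / q j)⁻¹ = engelProd q j / (q j - 1) := by
      rw [one_sub_div hne, inv_div, div_mul_div_cancel₀ hne]
    rw [← hval]
    exact (hasSum_geometric_of_lt_one (by positivity) hr₁).mul_left _
  rw [← hgeom.tsum_eq]
  refine (summable_engelProd_tail hq hq₀ j).tsum_le_tsum (fun k => ?_) hgeom.summable
  calc engelProd q (k + j + 1) = engelProd q (j + (k + 1)) := by rw [add_comm k j, add_assoc]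
    _ ≤ engelProd q j * (1 / q j) ^ (k + 1) := engelProd_add_le hq hq₀ j (k + 1)
    _ = engelProd q j / q j * (1 / q j) ^ k := by ring

lemma engelProd_lt_tsum_tail (j : ℕ) : engelProd q (j + 1) < ∑' k, engelProd q (k + j + 1) := by
  rw [(summable_engelProd_tail hq hq₀ j).tsum_eq_zero_add, zero_add, lt_add_iff_pos_right]
  refine ((summable_engelProd_tail hq hq₀ (j + 1)).tsum_pos (fun k => (engelProd_pos hq hq₀ _).le)
    0 (engelProd_pos hq hq₀ _)).trans_eq (tsum_congr fun k => ?_)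
  congr 1; omega

end Bounds

variable (hq : Monotone q) (hq₀ : 1 < q 0) (hq' : Monotone q') (hq'₀ : 1 < q' 0) {j : ℕ}
  (hagree : ∀ i < j, q i = q' i)
include hq hq₀ hq' hq'₀ hagree

lemma engelSeries_sub_engelSeries : engelSeries q - engelSeries q' =
    ∑' k, engelProd q (k + j + 1) - ∑' k, engelProd q' (k + j + 1) := by
  rw [engelSeries_eq_sum_add_tsum_tail hq hq₀ j, engelSeries_eq_sum_add_tsum_tail hq' hq'₀ j,
    sum_congr rfl fun i hi => engelProd_congr hagree (mem_range.mp hi)]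
  ring

lemma engelSeries_lt_engelSeries (hj : q' j + 1 ≤ q j) : engelSeries q < engelSeries q' := by
  rw [← sub_neg, engelSeries_sub_engelSeries hq hq₀ hq' hq'₀ hagree, sub_neg]
  have hq'j : 0 < q' j := by linarith [hq' (Nat.zero_le j)]
  calc ∑' k, engelProd q (k + j + 1) ≤ engelProd q j / (q j - 1) :=
        tsum_engelProd_tail_le hq hq₀ j
    _ ≤ engelProd q' j / q' j := by
      rw [engelProd_congr hagree le_rfl]
      exact div_le_div_of_nonneg_left (engelProd_pos hq' hq'₀ j).le hq'j (by linarith)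
    _ = engelProd q' (j + 1) := (engelProd_succ j).symm
    _ < ∑' k, engelProd q' (k + j + 1) := engelProd_lt_tsum_tail hq' hq'₀ j

lemma engelSeries_sub_lt_tsum_tail :
    engelSeries q - engelSeries q' < ∑' k, engelProd q (k + j + 1) := by
  rw [engelSeries_sub_engelSeries hq hq₀ hq' hq'₀ hagree, sub_lt_self_iff]
  exact (summable_engelProd_tail hq' hq'₀ j).tsum_pos (fun k => (engelProd_pos hq' hq'₀ _).le) 0
    (engelProd_pos hq' hq'₀ _)

end EngelSeries

section Greedy

lemma floor_inv_add_one_mul_sub_one_mem_Ioc {y : ℝ} (hy : 0 < y) :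
    (⌊y⁻¹⌋₊ + 1) * y - 1 ∈ Set.Ioc 0 y := by
  have hlo : y⁻¹ < ⌊y⁻¹⌋₊ + 1 := Nat.lt_floor_add_one _
  have hhi : (⌊y⁻¹⌋₊ : ℝ) ≤ y⁻¹ := Nat.floor_le (by positivity)
  constructor
  · have := mul_lt_mul_of_pos_right hlo hy
    rw [inv_mul_cancel₀ hy.ne'] at this
    linarith
  · have := mul_le_mul_of_nonneg_right hhi hy.le
    rw [inv_mul_cancel₀ hy.ne'] at this
    linarith

variable {x : ℝ}

noncomputable def engelRem (x : ℝ) : ℕ → ℝ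
  | 0 => x
  | k + 1 => (⌊(engelRem x k)⁻¹⌋₊ + 1) * engelRem x k - 1

noncomputable def greedyDenom (x : ℝ) (k : ℕ) : ℕ := ⌊(engelRem x k)⁻¹⌋₊ + 1

lemma engelRem_succ (k : ℕ) : engelRem x (k + 1) = greedyDenom x k * engelRem x k - 1 := by
  simp [engelRem, greedyDenom]

lemma engelRem_pos (hx : 0 < x) (k : ℕ) : 0 < engelRem x k := by
  induction k with
  | zero => exact hx
  | succ k ih => exact (floor_inv_add_one_mul_sub_one_mem_Ioc ih).1

lemma engelRem_antitone (hx : 0 < x) : Antitone (engelRem x) :=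
  antitone_nat_of_succ_le fun k => (floor_inv_add_one_mul_sub_one_mem_Ioc (engelRem_pos hx k)).2

lemma greedyDenom_mono (hx : 0 < x) : Monotone (greedyDenom x) := fun _ n hmn =>
  Nat.add_le_add_right (Nat.floor_le_floor
    (inv_anti₀ (engelRem_pos hx n) (engelRem_antitone hx hmn))) 1

lemma two_le_greedyDenom_zero (hx : 0 < x) (hx₁ : x ≤ 1) : 2 ≤ greedyDenom x 0 :=
  Nat.add_le_add_right ((Nat.one_le_floor_iff _).mpr ((one_le_inv₀ hx).mpr hx₁)) 1

lemma sum_engelProd_greedyDenom_add (K : ℕ) :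
    ∑ k ∈ range K, engelProd (fun m => (greedyDenom x m : ℝ)) (k + 1) +
      engelProd (fun m => (greedyDenom x m : ℝ)) K * engelRem x K = x := by
  induction K with
  | zero => simp [engelProd_zero, engelRem]
  | succ K ih =>
    have hq : (greedyDenom x K : ℝ) ≠ 0 := Nat.cast_ne_zero.mpr (Nat.succ_ne_zero _)
    rw [sum_range_succ, engelRem_succ, engelProd_succ]
    field_simp
    linear_combination (greedyDenom x K : ℝ) * ih

lemma engelSeries_greedyDenom (hx : 0 < x) (hx₁ : x ≤ 1) :
    engelSeries (fun m => (greedyDenom x m : ℝ)) = x := by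
  set q : ℕ → ℝ := fun m => (greedyDenom x m : ℝ)
  have hq : Monotone q := fun m n h => Nat.cast_le.mpr (greedyDenom_mono hx h)
  have hq₀ : 1 < q 0 := by simp only [q]; exact_mod_cast two_le_greedyDenom_zero hx hx₁
  have hprod : Tendsto (engelProd q) atTop (𝓝 0) :=
    (tendsto_add_atTop_iff_nat 1).mp (summable_engelProd hq hq₀).tendsto_atTop_zero
  have hrem : Tendsto (fun K => engelProd q K * engelRem x K) atTop (𝓝 0) := by
    refine squeeze_zero (fun K => (mul_pos (engelProd_pos hq hq₀ K) (engelRem_pos hx K)).le)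
      (fun K => mul_le_mul_of_nonneg_left (engelRem_antitone hx (Nat.zero_le K))
        (engelProd_pos hq hq₀ K).le) (by simpa using hprod.mul_const (engelRem x 0))
  have hlim := (tendsto_const_nhds (x := x)).sub hrem
  rw [sub_zero] at hlim
  refine ((hasSum_iff_tendsto_nat_of_nonneg (fun k => (engelProd_pos hq hq₀ _).le) x).mpr
    (hlim.congr fun K => ?_)).tsum_eq
  exact (eq_sub_of_add_eq (sum_engelProd_greedyDenom_add K)).symm

end Greedy

section Digits

variable {a b : ℕ → ℕ}

noncomputable def engelDenom (a : ℕ → ℕ) (m : ℕ) : ℝ :=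
  2 + (∑ i ∈ range (m + 1), (a i : ℝ)) - (m + 1)

lemma engelSum_eq_engelSeries (a : ℕ → ℕ) : engelSum a = engelSeries (engelDenom a) := rfl

lemma engelDenom_zero : engelDenom a 0 = a 0 + 1 := by
  simp only [engelDenom, zero_add, range_one, sum_singleton, Nat.cast_zero]; ring

lemma engelDenom_succ (m : ℕ) : engelDenom a (m + 1) = engelDenom a m + a (m + 1) - 1 := by
  simp only [engelDenom, sum_range_succ _ (m + 1)]; push_cast; ring

lemma engelDenom_mono (ha : ∀ k, 1 ≤ a k) : Monotone (engelDenom a) :=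
  monotone_nat_of_le_succ fun m => by
    rw [engelDenom_succ]; linarith [(Nat.one_le_cast (α := ℝ)).mpr (ha (m + 1))]

lemma one_lt_engelDenom_zero (ha : 1 ≤ a 0) : 1 < engelDenom a 0 := by
  rw [engelDenom_zero]; linarith [(Nat.one_le_cast (α := ℝ)).mpr ha]

lemma engelDenom_eq_add_sub {j : ℕ} (hagree : ∀ i < j, a i = b i) :
    engelDenom a j = engelDenom b j + a j - b j := by
  simp only [engelDenom, sum_range_succ _ j,
    sum_congr rfl fun i hi => congrArg (Nat.cast (R := ℝ)) (hagree i (mem_range.mp hi))]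
  ring

lemma engelDenom_congr {j : ℕ} (hagree : ∀ i < j, a i = b i) {m : ℕ} (hm : m < j) :
    engelDenom a m = engelDenom b m := by
  rw [engelDenom_eq_add_sub fun i hi => hagree i (hi.trans hm), hagree m hm,
    add_sub_cancel_right]

def digitsOfDenom (q : ℕ → ℕ) : ℕ → ℕ
  | 0 => q 0 - 1
  | k + 1 => q (k + 1) - q k + 1

lemma one_le_digitsOfDenom {q : ℕ → ℕ} (hq₀ : 2 ≤ q 0) : ∀ k, 1 ≤ digitsOfDenom q k
  | 0 => by simp only [digitsOfDenom]; omega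
  | k + 1 => Nat.le_add_left 1 _

lemma engelDenom_digitsOfDenom {q : ℕ → ℕ} (hq : Monotone q) (hq₀ : 1 ≤ q 0) (m : ℕ) :
    engelDenom (digitsOfDenom q) m = q m := by
  induction m with
  | zero => simp [engelDenom_zero, digitsOfDenom, Nat.cast_sub hq₀]
  | succ m ih =>
    rw [engelDenom_succ, ih, digitsOfDenom, Nat.cast_add, Nat.cast_sub (hq m.le_succ)]
    ring

end Digits

section Minkowski

variable {a b : ℕ → ℕ}

noncomputable def minkowskiTerm (a : ℕ → ℕ) (k : ℕ) : ℝ :=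
  (2 : ℝ) ^ ((1 : ℤ) - ∑ i ∈ range (k + 1), (a i : ℤ))

lemma engelMinkowski_eq_tsum (a : ℕ → ℕ) :
    engelMinkowski a = ∑' k, (-1 : ℝ) ^ k * minkowskiTerm a k := rfl

lemma minkowskiTerm_pos (k : ℕ) : 0 < minkowskiTerm a k := zpow_pos two_pos _

lemma minkowskiTerm_le_half {k l : ℕ}
    (h : ∑ i ∈ range (k + 1), b i < ∑ i ∈ range (l + 1), a i) :
    minkowskiTerm a l ≤ minkowskiTerm b k / 2 := by
  rw [minkowskiTerm, minkowskiTerm, div_eq_mul_inv, ← zpow_sub_one₀ two_ne_zero]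
  have hz : ((∑ i ∈ range (k + 1), b i : ℕ) : ℤ) + 1 ≤ ((∑ i ∈ range (l + 1), a i : ℕ) : ℤ) :=
    mod_cast h
  push_cast at hz
  exact zpow_le_zpow_right₀ one_le_two (by linarith)

lemma minkowskiTerm_succ_le_half (ha : ∀ k, 1 ≤ a k) (k : ℕ) :
    minkowskiTerm a (k + 1) ≤ minkowskiTerm a k / 2 :=
  minkowskiTerm_le_half (by rw [sum_range_succ _ (k + 1)]; have := ha (k + 1); omega)

lemma minkowskiTerm_strictAnti (ha : ∀ k, 1 ≤ a k) : StrictAnti (minkowskiTerm a) :=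
  strictAnti_nat_of_succ_lt fun k => (minkowskiTerm_succ_le_half ha k).trans_lt
    (half_lt_self (minkowskiTerm_pos k))

lemma summable_minkowskiTerm (ha : ∀ k, 1 ≤ a k) : Summable (minkowskiTerm a) :=
  summable_of_ratio_norm_eventually_le (r := 1 / 2) (by norm_num) <| .of_forall fun k => by
    simp only [Real.norm_of_nonneg (minkowskiTerm_pos _).le]
    linarith [minkowskiTerm_succ_le_half ha k]

lemma neg_one_pow_mul_engelMinkowski_lt (ha : ∀ k, 1 ≤ a k) (hb : ∀ k, 1 ≤ b k) {j : ℕ}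
    (hagree : ∀ i < j, a i = b i) (hj : b j < a j) :
    (-1 : ℝ) ^ j * engelMinkowski a < (-1 : ℝ) ^ j * engelMinkowski b := by
  have hsum : ∑ i ∈ range (j + 1), b i < ∑ i ∈ range (j + 1), a i := by
    have hhead : ∑ i ∈ range j, a i = ∑ i ∈ range j, b i :=
      sum_congr rfl fun i hi => hagree i (mem_range.mp hi)
    rw [sum_range_succ, sum_range_succ]
    omega
  rw [engelMinkowski_eq_tsum, engelMinkowski_eq_tsum]
  refine neg_one_pow_mul_alternating_tsum_lt (minkowskiTerm_strictAnti ha)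
    (summable_minkowskiTerm ha) (minkowskiTerm_strictAnti hb) (summable_minkowskiTerm hb)
    (fun i hi => ?_) ?_
  · rw [minkowskiTerm, minkowskiTerm,
      sum_congr rfl fun m hm => by rw [hagree m ((mem_range.mp hm).trans_le hi)]]
  · linarith [minkowskiTerm_le_half (a := a) hsum, minkowskiTerm_succ_le_half hb j]

end Minkowski

section EngelSum

variable {a b : ℕ → ℕ}

lemma engelSum_lt_engelSum (ha : ∀ k, 1 ≤ a k) (hb : ∀ k, 1 ≤ b k) {j : ℕ}
    (hagree : ∀ i < j, a i = b i) (hj : b j < a j) : engelSum a < engelSum b := by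
  have hden : engelDenom b j + 1 ≤ engelDenom a j := by
    have : (b j : ℝ) + 1 ≤ a j := by exact_mod_cast hj
    rw [engelDenom_eq_add_sub hagree]
    linarith
  exact engelSeries_lt_engelSeries (engelDenom_mono ha) (one_lt_engelDenom_zero (ha 0))
    (engelDenom_mono hb) (one_lt_engelDenom_zero (hb 0))
    (fun _ hi => engelDenom_congr hagree hi) hden

lemma eq_of_engelSum_eq (ha : ∀ k, 1 ≤ a k) (hb : ∀ k, 1 ≤ b k)
    (h : engelSum a = engelSum b) : a = b := by
  by_contra hne
  have hex : ∃ j, a j ≠ b j := Function.ne_iff.mp hne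
  have hagree : ∀ i < Nat.find hex, a i = b i := fun i hi => not_not.mp (Nat.find_min hex hi)
  rcases (Nat.find_spec hex).lt_or_gt with hlt | hgt
  · exact (engelSum_lt_engelSum hb ha (fun i hi => (hagree i hi).symm) hlt).ne' h
  · exact (engelSum_lt_engelSum ha hb hagree hgt).ne h

lemma EM_engelSum (ha : ∀ k, 1 ≤ a k) : EM (engelSum a) = engelMinkowski a := by
  have h : ∃ c : ℕ → ℕ, (∀ k, 1 ≤ c k) ∧ engelSum c = engelSum a := ⟨a, ha, rfl⟩
  rw [EM, dif_pos h, eq_of_engelSum_eq h.choose_spec.1 ha h.choose_spec.2]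

lemma exists_engelSum_eq {x : ℝ} (hx : 0 < x) (hx₁ : x ≤ 1) :
    ∃ a : ℕ → ℕ, (∀ k, 1 ≤ a k) ∧ engelSum a = x := by
  have hq := greedyDenom_mono hx
  have hq₀ := two_le_greedyDenom_zero hx hx₁
  refine ⟨digitsOfDenom (greedyDenom x), one_le_digitsOfDenom hq₀, ?_⟩
  rw [engelSum_eq_engelSeries, funext (engelDenom_digitsOfDenom hq (by omega))]
  exact engelSeries_greedyDenom hx hx₁

lemma engelSum_sub_lt_tsum_tail (ha : ∀ k, 1 ≤ a k) (hb : ∀ k, 1 ≤ b k) {j : ℕ}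
    (hagree : ∀ i < j, a i = b i) :
    engelSum a - engelSum b < ∑' k, engelProd (engelDenom a) (k + j + 1) :=
  engelSeries_sub_lt_tsum_tail (engelDenom_mono ha) (one_lt_engelDenom_zero (ha 0))
    (engelDenom_mono hb) (one_lt_engelDenom_zero (hb 0)) fun _ hi => engelDenom_congr hagree hi

end EngelSum

lemma eventually_exists_neg_one_pow_mul_EM_lt {s x : ℝ} (hx : 0 < x) (hx₁ : x ≤ 1) (hsx : s < x) :
    ∀ᶠ j in atTop, ∃ y ∈ Set.Ioo s x, (-1 : ℝ) ^ j * EM y < (-1 : ℝ) ^ j * EM x := by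
  obtain ⟨a, ha, rfl⟩ := exists_engelSum_eq hx hx₁
  filter_upwards [(tendsto_sum_nat_add fun k => engelProd (engelDenom a) (k + 1)).eventually
    (gt_mem_nhds (sub_pos.mpr hsx))] with j hj
  set b := Function.update a j (a j + 1)
  have hb : ∀ k, 1 ≤ b k := fun k => by
    rcases eq_or_ne k j with rfl | hk
    · simp [b]
    · simpa [b, hk] using ha k
  have hagree : ∀ i < j, b i = a i := fun i hi => Function.update_of_ne hi.ne _ _
  have hbj : a j < b j := by simp [b]
  refine ⟨engelSum b, ⟨?_, engelSum_lt_engelSum hb ha hagree hbj⟩, ?_⟩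
  · linarith [engelSum_sub_lt_tsum_tail ha hb fun i hi => (hagree i hi).symm]
  · rw [EM_engelSum hb, EM_engelSum ha]
    exact neg_one_pow_mul_engelMinkowski_lt hb ha hagree hbj

/-- `?_{EM}` is nowhere monotonic on `(0,1)`: every subinterval contains points
where it increases and points where it decreases.  Precisely, if the digit
sequences of `x₁ < x₂` first differ at position `p` with `a_p(x₂) < a_p(x₁)`,
then `?_{EM}(x₂) > ?_{EM}(x₁)` for odd `p` and `?_{EM}(x₂) < ?_{EM}(x₁)` for even `p`. -/
theorem engel_minkowski_nowhere_monotone :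
    (∀ s t : ℝ, 0 ≤ s → t ≤ 1 → s < t →
      (∃ x₁ x₂, x₁ ∈ Set.Ioo s t ∧ x₂ ∈ Set.Ioo s t ∧ x₁ < x₂ ∧ EM x₁ < EM x₂) ∧
      (∃ y₁ y₂, y₁ ∈ Set.Ioo s t ∧ y₂ ∈ Set.Ioo s t ∧ y₁ < y₂ ∧ EM y₂ < EM y₁)) ∧
    (∀ (a b : ℕ → ℕ), (∀ k, 1 ≤ a k) → (∀ k, 1 ≤ b k) → ∀ p : ℕ, 1 ≤ p →
      (∀ i, i < p - 1 → a i = b i) → b (p - 1) < a (p - 1) →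
      engelSum a < engelSum b →
      (Odd p → engelMinkowski a < engelMinkowski b) ∧
      (Even p → engelMinkowski b < engelMinkowski a)) := by
  refine ⟨fun s t hs ht hst => ?_, fun a b ha hb p hp hagree hdig _ => ?_⟩
  · obtain ⟨x, hsx, hxt⟩ := exists_between hst
    obtain ⟨N, hN⟩ := (eventually_exists_neg_one_pow_mul_EM_lt (hs.trans_lt hsx) (hxt.le.trans ht)
      hsx).exists_forall_of_atTop
    have hsub : Set.Ioo s x ⊆ Set.Ioo s t := Set.Ioo_subset_Ioo_right hxt.le
    obtain ⟨y, hy, hlt⟩ := hN (2 * N) (by omega)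
    obtain ⟨z, hz, hgt⟩ := hN (2 * N + 1) (by omega)
    rw [(even_two_mul N).neg_one_pow, one_mul, one_mul] at hlt
    rw [(odd_two_mul_add_one N).neg_one_pow, neg_one_mul, neg_one_mul, neg_lt_neg_iff] at hgt
    exact ⟨⟨y, x, hsub hy, ⟨hsx, hxt⟩, hy.2, hlt⟩, ⟨z, x, hsub hz, ⟨hsx, hxt⟩, hz.2, hgt⟩⟩
  · have hF := neg_one_pow_mul_engelMinkowski_lt ha hb hagree hdig
    refine ⟨fun hodd => ?_, fun heven => ?_⟩
    · simpa [(Nat.Odd.sub_odd hodd odd_one).neg_one_pow] using hF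
    · simpa [(Nat.Even.sub_odd hp heven odd_one).neg_one_pow] using hF
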